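/- arXiv:1805.08956 — 3 statements merged into one kernel-verified Lean document; each statement's English description precedes it below -/
import Mathlib

section
/- Let Ψ:[n]→[k] be surjective with membership matrix Z ∈ {0,1}^{n×k}, cluster sizes n_j = |Ψ⁻¹(j)| and n_min = min_j n_j, and let B ∈ R^{k×k}. Then the smallest nonzero singular value of P = Z·B·Zᵀ satisfies σ_min(P) = σ_min(Δ·B·Δᵀ) ≥ n_min·σ_min(B), where Δ = diag(√n₁, …, √n_k) and σ_min(B) is the smallest singular value of B. -/
open MeasureTheory ProbabilityTheory Finset Matrix Filter

noncomputable section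

namespace HSBM

/-- The set of (hyper)edges: all `d`-element subsets of `[n]`. -/
def edgeSet (n d : ℕ) : Finset (Finset (Fin n)) :=
  (Finset.univ : Finset (Fin n)).powersetCard d

/-- An edge is homogeneous w.r.t. a partition `Ψ` if all its nodes lie in one group. -/
def homogeneous {n k : ℕ} (Ψ : Fin n → Fin k) (e : Finset (Fin n)) : Prop :=
  ∀ i ∈ e, ∀ j ∈ e, Ψ i = Ψ j

/-- Similarity matrix built from the weights of the edges in `E₁` only. -/
def simMatrixOn {n : ℕ} (d : ℕ) (E₁ : Finset (Finset (Fin n))) (W : Finset (Fin n) → ℝ) :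
    Matrix (Fin n) (Fin n) ℝ := fun i j =>
  if i = j then 0
  else ∑ e ∈ edgeSet n d ∩ E₁, if ({i, j} : Finset (Fin n)) ⊆ e then W e else 0

/-- Similarity matrix `A` of a weighted hypergraph. -/
def simMatrix {n : ℕ} (d : ℕ) (W : Finset (Fin n) → ℝ) : Matrix (Fin n) (Fin n) ℝ :=
  simMatrixOn d (edgeSet n d) W

/-- Processed similarity matrix `A⁰`: rows (and columns) whose sum exceeds
`c_thr · (1/n) · Σ_{i,j} A_{ij}` are zeroed out. -/
def processed {n : ℕ} (cthr : ℝ) (A : Matrix (Fin n) (Fin n) ℝ) : Matrix (Fin n) (Fin n) ℝ :=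
  fun i j =>
    if cthr * ((1 : ℝ) / n) * ∑ a, ∑ b, A a b < ∑ l, A i l ∨
        cthr * ((1 : ℝ) / n) * ∑ a, ∑ b, A a b < ∑ l, A j l then 0
    else A i j

/-- `U` is an `n × k` matrix whose columns are orthonormal eigenvectors of `M`
associated with its `k` largest eigenvalues. -/
def IsTopEigen {n k : ℕ} (M : Matrix (Fin n) (Fin n) ℝ) (U : Matrix (Fin n) (Fin k) ℝ) : Prop :=
  ∃ (v : Fin n → Fin n → ℝ) (lam : Fin n → ℝ),
    (∀ a b : Fin n, v a ⬝ᵥ v b = if a = b then (1 : ℝ) else 0) ∧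
    (∀ a : Fin n, M.mulVec (v a) = lam a • v a) ∧
    (∀ a b : Fin n, a ≤ b → lam b ≤ lam a) ∧
    (∀ (j : Fin k) (hj : (j : ℕ) < n) (i : Fin n), U i j = v ⟨j, hj⟩ i)

def clusterOf {n k : ℕ} (Φ : Fin n → Fin k) (j : Fin k) : Finset (Fin n) :=
  Finset.univ.filter fun i => Φ i = j

/-- `k`-means cost of a partition `Φ` of the rows of `U`. -/
def kmCost {n k : ℕ} (U : Matrix (Fin n) (Fin k) ℝ) (Φ : Fin n → Fin k) : ℝ :=
  ∑ j : Fin k, ∑ i ∈ clusterOf Φ j,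
    ∑ m : Fin k,
      (U i m - (1 / ((clusterOf Φ j).card : ℝ)) * ∑ l ∈ clusterOf Φ j, U l m) ^ 2

/-- `Φ` is a `(1+ε)`-approximate `k`-means solution for the rows of `U`. -/
def IsApproxKMeans {n k : ℕ} (ε : ℝ) (U : Matrix (Fin n) (Fin k) ℝ) (Φ : Fin n → Fin k) : Prop :=
  ∀ Φ' : Fin n → Fin k, kmCost U Φ ≤ (1 + ε) * kmCost U Φ'

/-- `Φ` is an output of HSC run on the edges in `E₁`. -/
def IsHSCOutputOn {n k : ℕ} (d : ℕ) (cthr ε : ℝ) (E₁ : Finset (Finset (Fin n)))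
    (W : Finset (Fin n) → ℝ) (Φ : Fin n → Fin k) : Prop :=
  ∃ U : Matrix (Fin n) (Fin k) ℝ,
    IsTopEigen (processed cthr (simMatrixOn d E₁ W)) U ∧ IsApproxKMeans ε U Φ

/-- `Φ` is an output of HSC. -/
def IsHSCOutput {n k : ℕ} (d : ℕ) (cthr ε : ℝ) (W : Finset (Fin n) → ℝ)
    (Φ : Fin n → Fin k) : Prop :=
  IsHSCOutputOn d cthr ε (edgeSet n d) W Φ

/-- `E^{(i)}(j)`: the edges of `E₂` containing `i` whose other nodes all lie in `Φ₀⁻¹(j)`. -/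
def refineEdges {n k : ℕ} (E₂ : Finset (Finset (Fin n))) (Φ₀ : Fin n → Fin k)
    (i : Fin n) (j : Fin k) : Finset (Finset (Fin n)) :=
  E₂.filter fun e => i ∈ e ∧ ∀ l ∈ e, l ≠ i → Φ₀ l = j

/-- Average weight over `E^{(i)}(j)`. -/
def avgWeight {n k : ℕ} (W : Finset (Fin n) → ℝ) (E₂ : Finset (Finset (Fin n)))
    (Φ₀ : Fin n → Fin k) (i : Fin n) (j : Fin k) : ℝ :=
  (∑ e ∈ refineEdges E₂ Φ₀ i j, W e) / ((refineEdges E₂ Φ₀ i j).card : ℝ)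

/-- `Φ` is an output of HSCLR given realized weights `W` and split indicators `ξ`
(`ξ e = 1` iff `e ∈ E₁`). -/
def IsHSCLROutput {n k : ℕ} (d : ℕ) (cthr ε : ℝ) (W : Finset (Fin n) → ℝ)
    (ξ : Finset (Fin n) → ℝ) (Φ : Fin n → Fin k) : Prop :=
  ∃ Φ₀ : Fin n → Fin k,
    IsHSCOutputOn d cthr ε ((edgeSet n d).filter fun e => ξ e = 1) W Φ₀ ∧
    ∀ (i : Fin n) (j : Fin k),
      avgWeight W ((edgeSet n d).filter fun e => ξ e ≠ 1) Φ₀ i j ≤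
        avgWeight W ((edgeSet n d).filter fun e => ξ e ≠ 1) Φ₀ i (Φ i)

/-- Error fraction `err(Φ)`. -/
def errFrac {n k : ℕ} (Ψ Φ : Fin n → Fin k) : ℝ :=
  (⨅ π : Equiv.Perm (Fin k),
    ((Finset.univ.filter fun i => Ψ i ≠ π (Φ i)).card : ℝ)) / n

/-- Size of the `j`-th cluster. -/
def csize {n k : ℕ} (Ψ : Fin n → Fin k) (j : Fin k) : ℕ :=
  (Finset.univ.filter fun i => Ψ i = j).card

def nmin {n k : ℕ} (Ψ : Fin n → Fin k) : ℕ := sInf (Set.range fun j => csize Ψ j)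

def nmax {n k : ℕ} (Ψ : Fin n → Fin k) : ℕ := sSup (Set.range fun j => csize Ψ j)

/-- Worst-cluster error fraction `errr(Φ)`. -/
def errrFrac {n k : ℕ} (Ψ Φ : Fin n → Fin k) : ℝ :=
  ⨅ π : Equiv.Perm (Fin k), ⨆ j : Fin k,
    ((Finset.univ.filter fun i => Ψ i = j ∧ π (Φ i) ≠ j).card : ℝ) / (csize Ψ j : ℝ)

/-- Membership matrix `Z` of a partition `Ψ`. -/
def memMatrix {n k : ℕ} (Ψ : Fin n → Fin k) : Matrix (Fin n) (Fin k) ℝ :=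
  fun i j => if Ψ i = j then 1 else 0

/-- Spectral norm of a real square matrix. -/
def specNorm {n : ℕ} (M : Matrix (Fin n) (Fin n) ℝ) : ℝ :=
  ‖Matrix.toEuclideanCLM (𝕜 := ℝ) M‖

/-- Smallest nonzero singular value of a real square matrix. -/
def sigmaNZmin {m : ℕ} (M : Matrix (Fin m) (Fin m) ℝ) : ℝ :=
  sInf {r : ℝ | r ≠ 0 ∧ ∃ i : Fin m,
    r = Real.sqrt ((show (Mᵀ * M).IsHermitian by
      simpa using Matrix.isHermitian_conjTranspose_mul_self M).eigenvalues i)}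

/-- Smallest singular value of a real square matrix. -/
def sigmaMin {m : ℕ} (M : Matrix (Fin m) (Fin m) ℝ) : ℝ :=
  sInf {r : ℝ | ∃ i : Fin m,
    r = Real.sqrt ((show (Mᵀ * M).IsHermitian by
      simpa using Matrix.isHermitian_conjTranspose_mul_self M).eigenvalues i)}

/-- `den_M(S,T) = Σ_{i∈S} Σ_{j∈T} M_{ij}`. -/
def den {n : ℕ} (M : Matrix (Fin n) (Fin n) ℝ) (S T : Finset (Fin n)) : ℝ :=
  ∑ i ∈ S, ∑ j ∈ T, M i j

/-- `f_e(X) = 1` if all coordinates of `X` indexed by `e` agree, and `0` otherwise. -/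
def fval {nn : ℕ} (X : Fin nn → Bool) (e : Finset (Fin nn)) : ℝ :=
  if ∀ i ∈ e, ∀ j ∈ e, X i = X j then 1 else 0

/-- An instance of the weighted stochastic block model on a measurable space `Ω`. -/
structure WSBM (n d k : ℕ) (p q : ℝ) (Ω : Type*) [MeasurableSpace Ω] where
  μ : Measure Ω
  prob : IsProbabilityMeasure μ
  Ψ : Fin n → Fin k
  surj : Function.Surjective Ψ
  α : ℝ
  α_pos : 0 < α
  α_le_one : α ≤ 1
  W : Finset (Fin n) → Ω → ℝ
  W_meas : ∀ e, Measurable (W e)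
  W_range : ∀ e, ∀ᵐ ω ∂μ, W e ω ∈ Set.Icc (0 : ℝ) 1
  W_indep : iIndepFun W μ
  W_homo : ∀ e ∈ edgeSet n d, homogeneous Ψ e → ∫ ω, W e ω ∂μ = p * α
  W_hetero : ∀ e ∈ edgeSet n d, ¬ homogeneous Ψ e → ∫ ω, W e ω ∂μ = q * α

/-!
With `Δ = diag(√n_j)` one has `ZᵀZ = ΔᵀΔ = diag(n_j)`. For any `X`, `(XBXᵀ)ᵀ(XBXᵀ)` factors as
`X · (Bᵀ(XᵀX)BXᵀ)`, and since `AB` and `BA` have the same nonzero eigenvalues, its nonzero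
spectrum is that of `Bᵀ(XᵀX)B(XᵀX)`. Taking `X = Z` and `X = Δ` gives the same matrix, hence the
same nonzero singular values for `P` and `ΔBΔᵀ`.

For the bound, let `c = n_min`, so that `c|x|² ≤ |Δx|²`, and let `u` be a right singular vector of
`Q = ΔBΔᵀ` for a singular value `r > 0`. Then `u = Δw` with `w = r⁻² BᵀΔᵀΔBΔᵀu` in the row space
of `B`, and expanding in eigenvectors of `BᵀB` gives `σ(B) |⟨w, y⟩| ≤ |w| |By|`. With `y = Δᵀu`:
`⟨w, y⟩ = |u|²`, `c|w|² ≤ |u|²` and `c|By|² ≤ |Qu|² = r²|u|²`, so `c σ(B) ≤ r`.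
-/

end HSBM

namespace Matrix

section Spectrum

variable {K m n : Type*} [Field K] [Fintype m] [Fintype n] [DecidableEq m] [DecidableEq n]

open Polynomial in
theorem spectrum_mul_comm_diff_zero (A : Matrix m n K) (B : Matrix n m K) :
    spectrum K (A * B) \ {0} = spectrum K (B * A) \ {0} := by
  ext μ
  simp only [Set.mem_sdiff, Set.mem_singleton_iff, mem_spectrum_iff_isRoot_charpoly, IsRoot.def]
  have h := congrArg (eval μ) (charpoly_mul_comm' A B)
  simp only [eval_mul, eval_pow, eval_X] at h
  constructor <;> rintro ⟨hroot, hμ⟩ <;> refine ⟨?_, hμ⟩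
  · simpa [hroot, hμ] using h.symm
  · simpa [hroot, hμ] using h

theorem spectrum_transpose_mul_self_congr_diff_zero (X : Matrix m n K) (B : Matrix n n K) :
    spectrum K ((X * B * Xᵀ)ᵀ * (X * B * Xᵀ)) \ {0} =
      spectrum K (Bᵀ * (Xᵀ * X) * B * (Xᵀ * X)) \ {0} := by
  have hsplit : (X * B * Xᵀ)ᵀ * (X * B * Xᵀ) = X * (Bᵀ * (Xᵀ * X) * B * Xᵀ) := by
    simp only [transpose_mul, transpose_transpose, Matrix.mul_assoc]
  rw [hsplit, spectrum_mul_comm_diff_zero]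
  simp only [Matrix.mul_assoc]

theorem exists_mulVec_eq_smul_of_mem_spectrum {A : Matrix n n K} {μ : K}
    (h : μ ∈ spectrum K A) : ∃ v ≠ 0, A *ᵥ v = μ • v := by
  rw [← spectrum_toLin', ← Module.End.hasEigenvalue_iff_mem_spectrum] at h
  obtain ⟨v, hv⟩ := h.exists_hasEigenvector
  exact ⟨v, hv.2, by simpa using hv.apply_eq_smul⟩

end Spectrum

section Real

variable {m n : Type*} [Fintype m] [Fintype n]

theorem dotProduct_mulVec_self (A : Matrix m n ℝ) (x : n → ℝ) :
    (A *ᵥ x) ⬝ᵥ (A *ᵥ x) = x ⬝ᵥ ((Aᵀ * A) *ᵥ x) := by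
  rw [← mulVec_mulVec, dotProduct_mulVec x, vecMul_transpose]

theorem dotProduct_self_nonneg (x : n → ℝ) : 0 ≤ x ⬝ᵥ x :=
  Finset.sum_nonneg fun i _ => mul_self_nonneg (x i)

theorem posSemidef_transpose_mul_self (A : Matrix m n ℝ) : (Aᵀ * A).PosSemidef := by
  simpa using posSemidef_conjTranspose_mul_self A

variable [DecidableEq n] {H : Matrix n n ℝ}

theorem dotProduct_eq_sum_eigenvectorBasis (hH : H.IsHermitian) (x y : n → ℝ) :
    x ⬝ᵥ y = ∑ i, (⇑(hH.eigenvectorBasis i) ⬝ᵥ x) * (⇑(hH.eigenvectorBasis i) ⬝ᵥ y) := by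
  have h := hH.eigenvectorBasis.sum_inner_mul_inner (WithLp.toLp 2 x) (WithLp.toLp 2 y)
  simp only [EuclideanSpace.inner_eq_star_dotProduct, star_trivial] at h
  rw [dotProduct_comm, ← h]
  exact Finset.sum_congr rfl fun i _ => by rw [dotProduct_comm y]

theorem eigenvectorBasis_dotProduct_mulVec (hH : H.IsHermitian) (i : n) (y : n → ℝ) :
    ⇑(hH.eigenvectorBasis i) ⬝ᵥ (H *ᵥ y) = hH.eigenvalues i * (⇑(hH.eigenvectorBasis i) ⬝ᵥ y) := by
  rw [dotProduct_mulVec, ← mulVec_transpose, ← conjTranspose_eq_transpose_of_trivial, hH.eq,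
    hH.mulVec_eigenvectorBasis, smul_dotProduct, smul_eq_mul]

theorem eigenvectorBasis_dotProduct_transpose_mulVec_eq_zero {B : Matrix m n ℝ}
    (hH : (Bᵀ * B).IsHermitian) {i : n} (hi : hH.eigenvalues i = 0) (z : m → ℝ) :
    ⇑(hH.eigenvectorBasis i) ⬝ᵥ (Bᵀ *ᵥ z) = 0 := by
  have hBe : B *ᵥ ⇑(hH.eigenvectorBasis i) = 0 := by
    rw [← dotProduct_self_eq_zero, dotProduct_mulVec_self, hH.mulVec_eigenvectorBasis, hi,
      zero_smul, dotProduct_zero]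
  rw [dotProduct_mulVec, vecMul_transpose, hBe, zero_dotProduct]

theorem mul_dotProduct_self_le_diagonal_mulVec {g : n → ℝ} {c : ℝ} (hg : ∀ j, c ≤ g j ^ 2)
    (x : n → ℝ) : c * (x ⬝ᵥ x) ≤ (diagonal g *ᵥ x) ⬝ᵥ (diagonal g *ᵥ x) := by
  simp only [dotProduct, mulVec_diagonal, Finset.mul_sum]
  exact Finset.sum_le_sum fun j _ => by nlinarith [hg j, mul_self_nonneg (x j)]

end Real

end Matrix

namespace HSBM

open Matrix

section SingularValues

variable {m : ℕ}

def nonzeroSingularValues (M : Matrix (Fin m) (Fin m) ℝ) : Set ℝ :=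
  {r | 0 < r ∧ r ^ 2 ∈ spectrum ℝ (Mᵀ * M)}

theorem sigmaNZmin_eq_sInf (M : Matrix (Fin m) (Fin m) ℝ) :
    sigmaNZmin M = sInf (nonzeroSingularValues M) := by
  have hM := posSemidef_transpose_mul_self M
  unfold sigmaNZmin nonzeroSingularValues
  rw [hM.1.spectrum_real_eq_range_eigenvalues]
  congr 1
  ext r
  constructor
  · rintro ⟨hr, i, rfl⟩
    exact ⟨(Real.sqrt_nonneg _).lt_of_ne' hr, i, (Real.sq_sqrt (hM.eigenvalues_nonneg i)).symm⟩
  · rintro ⟨hr, i, hi⟩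
    exact ⟨hr.ne', i, by rw [hi, Real.sqrt_sq hr.le]⟩

theorem sqrt_eigenvalues_mem_nonzeroSingularValues {M : Matrix (Fin m) (Fin m) ℝ}
    (hM : (Mᵀ * M).IsHermitian) {i : Fin m} (hi : hM.eigenvalues i ≠ 0) :
    √(hM.eigenvalues i) ∈ nonzeroSingularValues M := by
  have hnonneg := (posSemidef_transpose_mul_self M).eigenvalues_nonneg i
  refine ⟨Real.sqrt_pos.2 (hnonneg.lt_of_ne' hi), ?_⟩
  rw [Real.sq_sqrt hnonneg]
  exact hM.eigenvalues_mem_spectrum_real i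

theorem nonzeroSingularValues_nonempty_iff (M : Matrix (Fin m) (Fin m) ℝ) :
    (nonzeroSingularValues M).Nonempty ↔ M ≠ 0 := by
  constructor
  · rintro ⟨r, hr, hmem⟩ rfl
    rw [transpose_zero, zero_mul, spectrum.mem_iff, sub_zero] at hmem
    exact hmem ((IsUnit.mk0 _ (pow_ne_zero 2 hr.ne')).map (algebraMap ℝ _))
  · intro hM
    have hH := (posSemidef_transpose_mul_self M).1
    have hMM : Mᵀ * M ≠ 0 := by
      rwa [← conjTranspose_eq_transpose_of_trivial, Ne, conjTranspose_mul_self_eq_zero]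
    obtain ⟨i, hi⟩ := Function.ne_iff.1 (hH.eigenvalues_eq_zero_iff.not.2 hMM)
    exact ⟨_, sqrt_eigenvalues_mem_nonzeroSingularValues hH hi⟩

theorem sigmaNZmin_nonneg (M : Matrix (Fin m) (Fin m) ℝ) : 0 ≤ sigmaNZmin M := by
  rw [sigmaNZmin_eq_sInf]
  exact Real.sInf_nonneg fun r hr => hr.1.le

theorem sigmaNZmin_le_of_mem {M : Matrix (Fin m) (Fin m) ℝ} {r : ℝ}
    (hr : r ∈ nonzeroSingularValues M) : sigmaNZmin M ≤ r := by
  rw [sigmaNZmin_eq_sInf]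
  exact csInf_le ⟨0, fun s hs => hs.1.le⟩ hr

theorem sq_sigmaNZmin_le_eigenvalues {B : Matrix (Fin m) (Fin m) ℝ} (hH : (Bᵀ * B).IsHermitian)
    {i : Fin m} (hi : hH.eigenvalues i ≠ 0) : sigmaNZmin B ^ 2 ≤ hH.eigenvalues i :=
  (pow_le_pow_left₀ (sigmaNZmin_nonneg B)
    (sigmaNZmin_le_of_mem (sqrt_eigenvalues_mem_nonzeroSingularValues hH hi)) 2).trans_eq
    (Real.sq_sqrt ((posSemidef_transpose_mul_self B).eigenvalues_nonneg i))

theorem sigmaNZmin_sq_mul_dotProduct_sq_le (B : Matrix (Fin m) (Fin m) ℝ) (z y : Fin m → ℝ) :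
    sigmaNZmin B ^ 2 * ((Bᵀ *ᵥ z) ⬝ᵥ y) ^ 2 ≤
      ((Bᵀ *ᵥ z) ⬝ᵥ (Bᵀ *ᵥ z)) * ((B *ᵥ y) ⬝ᵥ (B *ᵥ y)) := by
  set w := Bᵀ *ᵥ z
  have hH := (posSemidef_transpose_mul_self B).1
  have hwy := dotProduct_eq_sum_eigenvectorBasis hH w y
  have hww := dotProduct_eq_sum_eigenvectorBasis hH w w
  have hBy := dotProduct_eq_sum_eigenvectorBasis hH y ((Bᵀ * B) *ᵥ y)
  simp only [eigenvectorBasis_dotProduct_mulVec hH] at hBy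
  rw [← dotProduct_mulVec_self] at hBy
  set μ := hH.eigenvalues
  set e : Fin m → Fin m → ℝ := fun i => ⇑(hH.eigenvectorBasis i)
  -- The coefficients of `w` vanish where `μ i = 0`, so those of `y` can be dropped there.
  set y' := fun i => if μ i = 0 then 0 else e i ⬝ᵥ y
  calc sigmaNZmin B ^ 2 * (w ⬝ᵥ y) ^ 2
      = sigmaNZmin B ^ 2 * (∑ i, (e i ⬝ᵥ w) * y' i) ^ 2 := by
        rw [hwy]
        congr 2
        refine Finset.sum_congr rfl fun i _ => ?_
        by_cases hi : μ i = 0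
        · have hwi : ⇑(hH.eigenvectorBasis i) ⬝ᵥ w = 0 :=
            eigenvectorBasis_dotProduct_transpose_mulVec_eq_zero hH hi z
          simp [y', hi, hwi]
        · simp [y', e, hi]
    _ ≤ sigmaNZmin B ^ 2 * ((∑ i, (e i ⬝ᵥ w) ^ 2) * ∑ i, y' i ^ 2) := by
        gcongr
        exact Finset.sum_mul_sq_le_sq_mul_sq _ _ _
    _ = (∑ i, (e i ⬝ᵥ w) ^ 2) * ∑ i, sigmaNZmin B ^ 2 * y' i ^ 2 := by
        rw [← Finset.mul_sum]
        ring
    _ ≤ (∑ i, (e i ⬝ᵥ w) ^ 2) * ∑ i, (e i ⬝ᵥ y) * (μ i * (e i ⬝ᵥ y)) := by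
        refine mul_le_mul_of_nonneg_left (Finset.sum_le_sum fun i _ => ?_)
          (Finset.sum_nonneg fun i _ => sq_nonneg _)
        by_cases hi : μ i = 0
        · simp [y', hi]
        · simp only [y', if_neg hi]
          nlinarith [sq_sigmaNZmin_le_eigenvalues hH hi, sq_nonneg (e i ⬝ᵥ y)]
    _ = (w ⬝ᵥ w) * ((B *ᵥ y) ⬝ᵥ (B *ᵥ y)) := by
        simp only [e, hww, hBy, sq]

theorem mul_sigmaNZmin_le_of_mem_nonzeroSingularValues {c : ℝ} (hc : 0 ≤ c)
    {D : Matrix (Fin m) (Fin m) ℝ} (hD : ∀ x, c * (x ⬝ᵥ x) ≤ (D *ᵥ x) ⬝ᵥ (D *ᵥ x))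
    (B : Matrix (Fin m) (Fin m) ℝ) {r : ℝ} (hr : r ∈ nonzeroSingularValues (D * B * Dᵀ)) :
    c * sigmaNZmin B ≤ r := by
  obtain ⟨hr0, hrσ⟩ := hr
  obtain ⟨u, hu, hQu⟩ := exists_mulVec_eq_smul_of_mem_spectrum hrσ
  have hQQ : (D * B * Dᵀ)ᵀ * (D * B * Dᵀ) = D * Bᵀ * (Dᵀ * D * B * Dᵀ) := by
    simp only [transpose_mul, transpose_transpose, Matrix.mul_assoc]
  set z := (r ^ 2)⁻¹ • ((Dᵀ * D * B * Dᵀ) *ᵥ u)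
  set w := Bᵀ *ᵥ z
  have hDw : D *ᵥ w = u :=
    calc D *ᵥ w = (r ^ 2)⁻¹ • ((D * Bᵀ * (Dᵀ * D * B * Dᵀ)) *ᵥ u) := by
          simp only [w, z, mulVec_smul, mulVec_mulVec, Matrix.mul_assoc]
      _ = u := by rw [← hQQ, hQu, smul_smul, inv_mul_cancel₀ (by positivity), one_smul]
  have hwy : w ⬝ᵥ (Dᵀ *ᵥ u) = u ⬝ᵥ u := by
    rw [← hDw, mulVec_mulVec, ← dotProduct_mulVec_self]
  have hw : c * (w ⬝ᵥ w) ≤ u ⬝ᵥ u := hDw ▸ hD w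
  have hy : c * ((B *ᵥ (Dᵀ *ᵥ u)) ⬝ᵥ (B *ᵥ (Dᵀ *ᵥ u))) ≤ r ^ 2 * (u ⬝ᵥ u) := by
    refine (hD _).trans_eq ?_
    rw [mulVec_mulVec, mulVec_mulVec, dotProduct_mulVec_self, hQu,
      dotProduct_smul, smul_eq_mul]
  have hB := sigmaNZmin_sq_mul_dotProduct_sq_le B z (Dᵀ *ᵥ u)
  rw [hwy] at hB
  have hu0 : 0 < u ⬝ᵥ u := (dotProduct_self_nonneg u).lt_of_ne' (dotProduct_self_eq_zero.not.2 hu)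
  have hsq : (c * sigmaNZmin B) ^ 2 * (u ⬝ᵥ u) ^ 2 ≤ r ^ 2 * (u ⬝ᵥ u) ^ 2 :=
    calc (c * sigmaNZmin B) ^ 2 * (u ⬝ᵥ u) ^ 2
        = c ^ 2 * (sigmaNZmin B ^ 2 * (u ⬝ᵥ u) ^ 2) := by ring
      _ ≤ c ^ 2 * ((w ⬝ᵥ w) * ((B *ᵥ (Dᵀ *ᵥ u)) ⬝ᵥ (B *ᵥ (Dᵀ *ᵥ u)))) := by gcongr
      _ = (c * (w ⬝ᵥ w)) * (c * ((B *ᵥ (Dᵀ *ᵥ u)) ⬝ᵥ (B *ᵥ (Dᵀ *ᵥ u)))) := by ring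
      _ ≤ (u ⬝ᵥ u) * (r ^ 2 * (u ⬝ᵥ u)) :=
        mul_le_mul hw hy (mul_nonneg hc (dotProduct_self_nonneg _)) hu0.le
      _ = r ^ 2 * (u ⬝ᵥ u) ^ 2 := by ring
  exact le_of_pow_le_pow_left₀ two_ne_zero hr0.le
    (le_of_mul_le_mul_right hsq (by positivity))

theorem mul_sigmaNZmin_le_sigmaNZmin_diagonal_mul_mul_transpose {g : Fin m → ℝ} {c : ℝ}
    (hg : ∀ j, c ≤ g j ^ 2) (B : Matrix (Fin m) (Fin m) ℝ) :
    c * sigmaNZmin B ≤ sigmaNZmin (diagonal g * B * (diagonal g)ᵀ) := by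
  rcases le_or_gt c 0 with hc | hc
  · exact (mul_nonpos_of_nonpos_of_nonneg hc (sigmaNZmin_nonneg B)).trans (sigmaNZmin_nonneg _)
  rcases eq_or_ne B 0 with rfl | hB
  · have h0 : ¬(nonzeroSingularValues (0 : Matrix (Fin m) (Fin m) ℝ)).Nonempty := by
      rw [nonzeroSingularValues_nonempty_iff]
      exact fun h => h rfl
    rw [sigmaNZmin_eq_sInf 0, Set.not_nonempty_iff_eq_empty.1 h0, Real.sInf_empty, mul_zero]
    exact sigmaNZmin_nonneg _
  have hg0 : ∀ j, g j ≠ 0 := fun j hj => by nlinarith [hg j, hj]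
  have hQ : diagonal g * B * (diagonal g)ᵀ ≠ 0 := by
    refine fun hQ => hB (Matrix.ext fun i j => ?_)
    simpa [hg0] using congr_fun₂ hQ i j
  rw [sigmaNZmin_eq_sInf (diagonal g * B * _)]
  exact le_csInf ((nonzeroSingularValues_nonempty_iff _).2 hQ) fun r hr =>
    mul_sigmaNZmin_le_of_mem_nonzeroSingularValues hc.le
      (mul_dotProduct_self_le_diagonal_mulVec hg) B hr

theorem sigmaNZmin_eq_of_spectrum_diff_zero_eq {m' : ℕ} {M : Matrix (Fin m) (Fin m) ℝ}
    {N : Matrix (Fin m') (Fin m') ℝ}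
    (h : spectrum ℝ (Mᵀ * M) \ {0} = spectrum ℝ (Nᵀ * N) \ {0}) :
    sigmaNZmin M = sigmaNZmin N := by
  rw [sigmaNZmin_eq_sInf, sigmaNZmin_eq_sInf]
  congr 1
  ext r
  refine and_congr_right fun hr => ?_
  have hr2 : r ^ 2 ≠ 0 := (pow_pos hr 2).ne'
  exact ⟨fun hM => (h.subset ⟨hM, hr2⟩).1, fun hN => (h.superset ⟨hN, hr2⟩).1⟩

end SingularValues

theorem transpose_memMatrix_mul_memMatrix {n k : ℕ} (Ψ : Fin n → Fin k) :
    (memMatrix Ψ)ᵀ * memMatrix Ψ = diagonal fun j => (csize Ψ j : ℝ) := by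
  ext j l
  simp only [mul_apply, transpose_apply, memMatrix, boole_mul, ← ite_and, Finset.sum_boole,
    diagonal_apply, csize]
  rcases eq_or_ne j l with rfl | hjl
  · simp
  · simp only [if_neg hjl, Nat.cast_eq_zero, Finset.card_eq_zero, Finset.filter_eq_empty_iff]
    exact fun i _ h => hjl (h.1.symm.trans h.2)

theorem statement6_general (n k : ℕ) (Ψ : Fin n → Fin k)
    (B : Matrix (Fin k) (Fin k) ℝ) :
    sigmaNZmin (memMatrix Ψ * B * (memMatrix Ψ)ᵀ) =
        sigmaNZmin (Matrix.diagonal (fun j => Real.sqrt (csize Ψ j : ℝ)) * B *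
          (Matrix.diagonal fun j => Real.sqrt (csize Ψ j : ℝ))ᵀ) ∧
      (nmin Ψ : ℝ) * sigmaNZmin B ≤ sigmaNZmin (memMatrix Ψ * B * (memMatrix Ψ)ᵀ) := by
  set Δ := diagonal fun j => √(csize Ψ j : ℝ)
  have hΔ : Δᵀ * Δ = diagonal fun j => (csize Ψ j : ℝ) := by
    simp [Δ, diagonal_mul_diagonal]
  have hsv : sigmaNZmin (memMatrix Ψ * B * (memMatrix Ψ)ᵀ) = sigmaNZmin (Δ * B * Δᵀ) :=
    sigmaNZmin_eq_of_spectrum_diff_zero_eq (by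
      rw [spectrum_transpose_mul_self_congr_diff_zero, spectrum_transpose_mul_self_congr_diff_zero,
        transpose_memMatrix_mul_memMatrix, hΔ])
  refine ⟨hsv, hsv ▸ mul_sigmaNZmin_le_sigmaNZmin_diagonal_mul_mul_transpose (fun j => ?_) B⟩
  rw [Real.sq_sqrt (Nat.cast_nonneg _)]
  exact_mod_cast (Nat.sInf_le ⟨j, rfl⟩ : nmin Ψ ≤ csize Ψ j)

/-- the smallest nonzero singular value of `P = Z B Zᵀ`. -/
theorem statement6 (n k : ℕ) (Ψ : Fin n → Fin k) (hΨ : Function.Surjective Ψ)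
    (B : Matrix (Fin k) (Fin k) ℝ) :
    sigmaNZmin (memMatrix Ψ * B * (memMatrix Ψ)ᵀ) =
        sigmaNZmin (Matrix.diagonal (fun j => Real.sqrt (csize Ψ j : ℝ)) * B *
          (Matrix.diagonal fun j => Real.sqrt (csize Ψ j : ℝ))ᵀ) ∧
      (nmin Ψ : ℝ) * sigmaNZmin B ≤ sigmaNZmin (memMatrix Ψ * B * (memMatrix Ψ)ᵀ) :=
  statement6_general n k Ψ B

end HSBM
end
end

section
/- Let b > 0 and let S = X₁ + ⋯ + X_n be the sum of n mutually independent random variables each taking values in [0,b]. There exists a constant c₇ > 0 depending only on b such that for every a ≥ E[S] and every k ≥ c₇: Pr(S > k·a) ≤ exp(−(1/(2b))·k·log k·a). -/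
open MeasureTheory ProbabilityTheory Finset Matrix Filter

noncomputable section

/-!
Chernoff's method. By convexity of `exp`, a variable `X` with values in `[0, b]` satisfies
`E[exp (t X)] ≤ 1 + E[X] (exp (t b) - 1) / b ≤ exp (E[X] (exp (t b) - 1) / b)`, so by independence
`E[exp (t S)] ≤ exp (a (exp (t b) - 1) / b)`. Markov's inequality at `t = log K / b` then bounds
`Pr(S ≥ K a)` by `exp (-(a / b) (K log K - K + 1))`, and `K - 1 ≤ (K log K) / 2` once `K ≥ e²`.
-/

namespace Real

lemma sub_one_le_mul_log_div_two {K : ℝ} (hK : exp 2 ≤ K) : K - 1 ≤ K * log K / 2 := by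
  have hK0 : 0 < K := (exp_pos 2).trans_le hK
  have hlog : 2 ≤ log K := (le_log_iff_exp_le hK0).2 hK
  nlinarith

lemma exp_mul_le_one_add_of_mem_Icc {b : ℝ} (hb : 0 < b) (t : ℝ) {x : ℝ} (hx : x ∈ Set.Icc 0 b) :
    exp (t * x) ≤ 1 + x / b * (exp (t * b) - 1) := by
  have hxb : x / b ≤ 1 := (div_le_one hb).2 hx.2
  have hconv := convexOn_exp.2 (Set.mem_univ 0) (Set.mem_univ (t * b))
    (sub_nonneg.2 hxb) (div_nonneg hx.1 hb.le) (sub_add_cancel 1 (x / b))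
  have hcomb : (1 - x / b) • (0 : ℝ) + (x / b) • (t * b) = t * x := by
    simp only [smul_eq_mul, mul_zero, zero_add]; field_simp
  rw [hcomb, smul_eq_mul, smul_eq_mul, exp_zero] at hconv
  linarith

end Real

namespace ProbabilityTheory

open Real

variable {Ω ι : Type*} [MeasurableSpace Ω] {μ : Measure Ω} {b : ℝ}

lemma mgf_le_exp_of_mem_Icc [IsProbabilityMeasure μ] {X : Ω → ℝ} (hb : 0 < b)
    (hX : AEMeasurable X μ) (hXb : ∀ᵐ ω ∂μ, X ω ∈ Set.Icc 0 b) (t : ℝ) :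
    mgf X μ t ≤ exp ((∫ ω, X ω ∂μ) / b * (exp (t * b) - 1)) := by
  have hXint : Integrable X μ := .of_mem_Icc 0 b hX hXb
  have hchord : Integrable (fun ω => 1 + X ω / b * (exp (t * b) - 1)) μ :=
    (integrable_const 1).add ((hXint.div_const b).mul_const _)
  calc mgf X μ t ≤ ∫ ω, 1 + X ω / b * (exp (t * b) - 1) ∂μ :=
        integral_mono_ae (integrable_exp_mul_of_mem_Icc hX hXb) hchord
          (hXb.mono fun ω hω => exp_mul_le_one_add_of_mem_Icc hb t hω)
    _ = 1 + (∫ ω, X ω ∂μ) / b * (exp (t * b) - 1) := by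
        rw [integral_add (integrable_const 1) ((hXint.div_const b).mul_const _),
          integral_const, integral_mul_const, integral_div]
        simp
    _ ≤ exp ((∫ ω, X ω ∂μ) / b * (exp (t * b) - 1)) := by
        linarith [add_one_le_exp ((∫ ω, X ω ∂μ) / b * (exp (t * b) - 1))]

lemma iIndepFun.mgf_sum_le_exp_of_mem_Icc {X : ι → Ω → ℝ} (hind : iIndepFun X μ) (hb : 0 < b)
    (hX : ∀ i, AEMeasurable (X i) μ) (hXb : ∀ i, ∀ᵐ ω ∂μ, X i ω ∈ Set.Icc 0 b)
    (s : Finset ι) (t : ℝ) :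
    mgf (∑ i ∈ s, X i) μ t ≤ exp ((∫ ω, ∑ i ∈ s, X i ω ∂μ) / b * (exp (t * b) - 1)) := by
  have := hind.isProbabilityMeasure
  rw [hind.mgf_sum₀ hX, integral_finsetSum s fun i _ => .of_mem_Icc 0 b (hX i) (hXb i),
    Finset.sum_div, Finset.sum_mul, exp_sum]
  exact Finset.prod_le_prod (fun i _ => mgf_nonneg) fun i _ =>
    mgf_le_exp_of_mem_Icc hb (hX i) (hXb i) t

lemma iIndepFun.measureReal_mul_le_sum_le {X : ι → Ω → ℝ} (hind : iIndepFun X μ) (hb : 0 < b)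
    (hX : ∀ i, Measurable (X i)) (hXb : ∀ i, ∀ᵐ ω ∂μ, X i ω ∈ Set.Icc 0 b) (s : Finset ι)
    {a : ℝ} (ha : ∫ ω, ∑ i ∈ s, X i ω ∂μ ≤ a) {K : ℝ} (hK : 1 ≤ K) :
    μ.real {ω | K * a ≤ ∑ i ∈ s, X i ω} ≤ exp (-(a / b) * (K * log K - K + 1)) := by
  have := hind.isProbabilityMeasure
  set t := log K / b
  have ht : 0 ≤ t := div_nonneg (log_nonneg hK) hb.le
  have hetb : exp (t * b) = K := by
    rw [div_mul_cancel₀ _ hb.ne', exp_log (by linarith)]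
  have hchernoff := measure_ge_le_exp_mul_mgf (X := ∑ i ∈ s, X i) (K * a) ht
    (hind.integrable_exp_mul_sum hX fun i _ =>
      integrable_exp_mul_of_mem_Icc (hX i).aemeasurable (hXb i))
  have hmgf := hind.mgf_sum_le_exp_of_mem_Icc hb (fun i => (hX i).aemeasurable) hXb s t
  simp only [Finset.sum_apply] at hchernoff
  rw [hetb] at hmgf
  calc μ.real {ω | K * a ≤ ∑ i ∈ s, X i ω}
      ≤ exp (-t * (K * a)) * exp ((∫ ω, ∑ i ∈ s, X i ω ∂μ) / b * (K - 1)) :=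
        hchernoff.trans (by gcongr)
    _ ≤ exp (-t * (K * a)) * exp (a / b * (K - 1)) := by gcongr
    _ = exp (-(a / b) * (K * log K - K + 1)) := by
        rw [← exp_add]
        congr 1
        ring

end ProbabilityTheory

namespace HSBM

open Real

/-- large-deviation bound with a `k log k` exponent. -/
theorem statement9 (b : ℝ) (hb : 0 < b) :
    ∃ c₇ : ℝ, 0 < c₇ ∧
      ∀ (Ω : Type) [MeasurableSpace Ω] (μ : Measure Ω), IsProbabilityMeasure μ →
      ∀ (n : ℕ) (X : Fin n → Ω → ℝ),
        (∀ i, Measurable (X i)) →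
        (∀ i, ∀ᵐ ω ∂μ, X i ω ∈ Set.Icc (0 : ℝ) b) →
        iIndepFun X μ →
        ∀ a : ℝ, (∫ ω, ∑ i, X i ω ∂μ) ≤ a →
        ∀ K : ℝ, c₇ ≤ K →
        μ {ω | K * a < ∑ i, X i ω} ≤
          ENNReal.ofReal (Real.exp (-(1 / (2 * b)) * K * Real.log K * a)) := by
  refine ⟨exp 2, exp_pos 2, fun Ω _ μ _ n X hX hXb hind a ha K hK => ?_⟩
  have hK1 : 1 ≤ K := (one_le_exp zero_le_two).trans hK
  have ha0 : 0 ≤ a := le_trans (integral_nonneg_of_ae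
    ((ae_all_iff.2 hXb).mono fun ω hω => Finset.sum_nonneg fun i _ => (hω i).1)) ha
  have hexponent : -(a / b) * (K * log K - K + 1) ≤ -(1 / (2 * b)) * K * log K * a := by
    have hK' := sub_one_le_mul_log_div_two hK
    have hab : 0 ≤ a / b := div_nonneg ha0 hb.le
    calc -(a / b) * (K * log K - K + 1) ≤ -(a / b) * (K * log K / 2) := by nlinarith
      _ = -(1 / (2 * b)) * K * log K * a := by field_simp
  calc μ {ω | K * a < ∑ i, X i ω} ≤ μ {ω | K * a ≤ ∑ i, X i ω} :=
        measure_mono (Set.ofPred_subset_ofPred.2 fun _ => le_of_lt)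
    _ = ENNReal.ofReal (μ.real {ω | K * a ≤ ∑ i, X i ω}) := (ofReal_measureReal).symm
    _ ≤ ENNReal.ofReal (exp (-(1 / (2 * b)) * K * log K * a)) :=
        ENNReal.ofReal_le_ofReal <|
          (hind.measureReal_mul_le_sum_le hb hX hXb _ ha hK1).trans (exp_le_exp.2 hexponent)

end HSBM
end
end

section
/- Fix constants c, c', p > 0. There exists γ₀ ∈ (0,1) such that for every γ ∈ (0,γ₀) the following holds: suppose for each n we are given m_n ∈ N and α_n ∈ (0,1) with p·α_n·m_n ≥ c'·log n, together with mutually independent random variables W₁, …, W_{M_n} taking values in [0,1] with E[W_i] ≤ p·α_n for every i, where M_n ≤ c·γ·m_n. Then n·Pr(Σ_{i=1}^{M_n} W_i > p·α_n·m_n/√(log(1/γ))) → 0 as n → ∞. -/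
open MeasureTheory ProbabilityTheory Finset Matrix Filter

noncomputable section

namespace HSBM

/-! A Chernoff bound at the large tilt `s = log (1/γ)`: the sum `S` of the `M ≤ cγm`
variables, each of mean at most `b = pα`, satisfies `𝔼 e^{sS} ≤ exp (M (e^s - 1) b) ≤ e^{cbm}`,
so `P(S > bm/√s) ≤ exp (-(√s - c) bm)`. Once `√s ≥ max (2c) (4/c')`, the hypothesis
`bm ≥ c' log n` makes this at most `n⁻²`. -/

section Chernoff

open Real

variable {Ω : Type*} [MeasurableSpace Ω] {μ : Measure Ω}

lemma exp_mul_le_one_add_mul_of_mem_Icc {s x : ℝ} (hx : x ∈ Set.Icc (0 : ℝ) 1) :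
    exp (s * x) ≤ 1 + (exp s - 1) * x := by
  have h := convexOn_exp.2 (Set.mem_univ s) (Set.mem_univ 0) hx.1 (sub_nonneg.2 hx.2)
    (add_sub_cancel x 1)
  simp only [smul_eq_mul, mul_zero, add_zero, exp_zero] at h
  rw [mul_comm s x]
  linarith

lemma mgf_le_exp_of_mem_Icc [IsProbabilityMeasure μ] {X : Ω → ℝ} (hX : AEMeasurable X μ)
    (hr : ∀ᵐ ω ∂μ, X ω ∈ Set.Icc (0 : ℝ) 1) {b s : ℝ} (hmean : μ[X] ≤ b) (hs : 0 ≤ s) :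
    mgf X μ s ≤ exp ((exp s - 1) * b) := by
  have hXint : Integrable X μ := Integrable.of_mem_Icc 0 1 hX hr
  have hes : 0 ≤ exp s - 1 := sub_nonneg.2 (one_le_exp hs)
  calc mgf X μ s = ∫ ω, exp (s * X ω) ∂μ := rfl
    _ ≤ ∫ ω, 1 + (exp s - 1) * X ω ∂μ :=
        integral_mono_ae (integrable_exp_mul_of_mem_Icc hX hr)
          ((integrable_const 1).add (hXint.const_mul _))
          (hr.mono fun ω hω => exp_mul_le_one_add_mul_of_mem_Icc hω)
    _ = 1 + (exp s - 1) * μ[X] := by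
        rw [integral_add (integrable_const 1) (hXint.const_mul _), integral_const_mul]
        simp
    _ ≤ 1 + (exp s - 1) * b := by gcongr
    _ ≤ exp ((exp s - 1) * b) := by linarith [add_one_le_exp ((exp s - 1) * b)]

lemma measureReal_sum_gt_le_exp [IsProbabilityMeasure μ] {ι : Type*} [Fintype ι]
    {X : ι → Ω → ℝ} (hmeas : ∀ j, Measurable (X j))
    (hr : ∀ j, ∀ᵐ ω ∂μ, X j ω ∈ Set.Icc (0 : ℝ) 1) (hindep : iIndepFun X μ)
    {b s : ℝ} (hmean : ∀ j, μ[X j] ≤ b) (hs : 0 ≤ s) (ε : ℝ) :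
    μ.real {ω | ε < ∑ j, X j ω} ≤ exp (-s * ε + Fintype.card ι * ((exp s - 1) * b)) := by
  have hsum_range : ∀ᵐ ω ∂μ, (∑ j, X j) ω ≤ Fintype.card ι := by
    filter_upwards [ae_all_iff.2 hr] with ω hω
    simpa [Finset.sum_apply] using Finset.sum_le_sum fun j (_ : j ∈ univ) => (hω j).2
  have hmgf : mgf (∑ j, X j) μ s ≤ exp (Fintype.card ι * ((exp s - 1) * b)) := by
    calc mgf (∑ j, X j) μ s = ∏ j, mgf (X j) μ s := hindep.mgf_sum hmeas _
      _ ≤ ∏ _j : ι, exp ((exp s - 1) * b) := Finset.prod_le_prod (fun _ _ => mgf_nonneg)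
          fun j _ => mgf_le_exp_of_mem_Icc (hmeas j).aemeasurable (hr j) (hmean j) hs
      _ = exp (Fintype.card ι * ((exp s - 1) * b)) := by
          rw [Finset.prod_const, Finset.card_univ, exp_nat_mul]
  calc μ.real {ω | ε < ∑ j, X j ω} ≤ μ.real {ω | ε ≤ (∑ j, X j) ω} := by
        refine measureReal_mono (fun ω hω => ?_)
        simpa [Finset.sum_apply] using (Set.mem_ofPred.1 hω).le
    _ ≤ exp (-s * ε) * mgf (∑ j, X j) μ s :=
        measure_ge_le_exp_mul_mgf ε hs (integrable_exp_mul_of_le s _ hs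
          (by fun_prop) hsum_range)
    _ ≤ exp (-s * ε) * exp (Fintype.card ι * ((exp s - 1) * b)) := by gcongr
    _ = _ := (exp_add _ _).symm

lemma measureReal_sum_gt_le_inv_sq [IsProbabilityMeasure μ] {ι : Type*} [Fintype ι]
    {X : ι → Ω → ℝ} (hmeas : ∀ j, Measurable (X j))
    (hr : ∀ j, ∀ᵐ ω ∂μ, X j ω ∈ Set.Icc (0 : ℝ) 1) (hindep : iIndepFun X μ)
    {b : ℝ} (hb : 0 ≤ b) (hmean : ∀ j, μ[X j] ≤ b) {c c' γ n : ℝ} {m : ℕ} (hγ : 0 < γ)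
    (hcard : (Fintype.card ι : ℝ) ≤ c * γ * m) (hlog : c' * log n ≤ b * m) (hn : 1 ≤ n)
    (h2c : 2 * c ≤ √(log (1 / γ))) (h4c' : 4 ≤ √(log (1 / γ)) * c') :
    μ.real {ω | b * m / √(log (1 / γ)) < ∑ j, X j ω} ≤ (n ^ 2)⁻¹ := by
  set L := log (1 / γ)
  have hsqrt : 0 < √L := (sqrt_nonneg L).lt_of_ne fun h => by rw [← h] at h4c'; linarith
  have hL : 0 < L := sqrt_pos.1 hsqrt
  have hbm : 0 ≤ b * m := by positivity
  have hcard_b : Fintype.card ι * ((exp L - 1) * b) ≤ c * (b * m) :=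
    calc Fintype.card ι * ((exp L - 1) * b) ≤ Fintype.card ι * (exp L * b) := by
          gcongr
          exact sub_le_self _ zero_le_one
      _ ≤ (c * γ * m) * (exp L * b) := by gcongr
      _ = c * (b * m) := by
          rw [exp_log (by positivity)]
          field_simp
  have hexponent : -L * (b * m / √L) + Fintype.card ι * ((exp L - 1) * b) ≤ -(2 * log n) := by
    have hL_sqrt : -L * (b * m / √L) = -(√L * (b * m)) := by
      rw [show -L * (b * m / √L) = -(L / √L * (b * m)) by ring, div_sqrt]
    rw [hL_sqrt]
    nlinarith [mul_nonneg (sub_nonneg.2 h2c) hbm, mul_nonneg hsqrt.le (sub_nonneg.2 hlog),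
      mul_nonneg (sub_nonneg.2 h4c') (log_nonneg hn)]
  calc μ.real {ω | b * m / √L < ∑ j, X j ω}
      ≤ exp (-L * (b * m / √L) + Fintype.card ι * ((exp L - 1) * b)) :=
        measureReal_sum_gt_le_exp hmeas hr hindep hmean hL.le _
    _ ≤ exp (-(2 * log n)) := exp_le_exp.2 hexponent
    _ = (n ^ 2)⁻¹ := by
        rw [Real.exp_neg, ← exp_log (by positivity : (0 : ℝ) < n ^ 2), log_pow]
        norm_num

lemma lt_sqrt_log_one_div {K γ : ℝ} (hK : 0 ≤ K) (hγ : 0 < γ) (hγK : γ < exp (-K ^ 2)) :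
    K < √(log (1 / γ)) := by
  rw [lt_sqrt hK, one_div, log_inv, lt_neg]
  exact (log_lt_iff_lt_exp hγ).2 hγK

end Chernoff

theorem statement15_general (c c' p : ℝ) (hc' : 0 < c') (hp : 0 < p) :
    ∃ γ₀ : ℝ, 0 < γ₀ ∧ γ₀ < 1 ∧
      ∀ γ : ℝ, 0 < γ → γ < γ₀ →
      ∀ (m : ℕ → ℕ) (a : ℕ → ℝ) (M : ℕ → ℕ)
        (Ω : ℕ → Type) [∀ i, MeasurableSpace (Ω i)] (μ : ∀ i, Measure (Ω i)),
        (∀ i, IsProbabilityMeasure (μ i)) →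
        (∀ i, 0 < a i) → (∀ i, a i < 1) →
        (∀ i : ℕ, c' * Real.log i ≤ p * a i * m i) →
        (∀ i, (M i : ℝ) ≤ c * γ * m i) →
        ∀ W : ∀ i, Fin (M i) → Ω i → ℝ,
          (∀ i j, Measurable (W i j)) →
          (∀ i j, ∀ᵐ ω ∂μ i, W i j ω ∈ Set.Icc (0 : ℝ) 1) →
          (∀ i, iIndepFun (W i) (μ i)) →
          (∀ i j, (∫ ω, W i j ω ∂μ i) ≤ p * a i) →
          Tendsto (fun i : ℕ => (i : ℝ) *
              ((μ i) {ω | p * a i * m i / Real.sqrt (Real.log (1 / γ)) <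
                ∑ j, W i j ω}).toReal)
            atTop (nhds 0) := by
  set K := max (2 * c) (4 / c')
  have hK : 0 < K := lt_max_of_lt_right (by positivity)
  refine ⟨Real.exp (-K ^ 2), Real.exp_pos _, Real.exp_lt_one_iff.2 (neg_lt_zero.2 (pow_pos hK 2)), ?_⟩
  intro γ hγ hγγ₀ m a M Ω _ μ hμ ha _ hlog hM W hWmeas hWr hWindep hWmean
  have hKL := lt_sqrt_log_one_div hK.le hγ hγγ₀
  have h2c : 2 * c ≤ √(Real.log (1 / γ)) := (le_max_left _ _).trans hKL.le
  have h4c' : 4 ≤ √(Real.log (1 / γ)) * c' :=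
    (div_le_iff₀ hc').1 ((le_max_right _ _).trans hKL.le)
  refine squeeze_zero' (Eventually.of_forall fun n => by positivity) ?_
    tendsto_inv_atTop_nhds_zero_nat
  filter_upwards [eventually_ge_atTop 1] with n hn
  have := hμ n
  calc (n : ℝ) * (μ n {ω | p * a n * m n / √(Real.log (1 / γ)) < ∑ j, W n j ω}).toReal
      ≤ n * ((n : ℝ) ^ 2)⁻¹ := by
        gcongr
        exact measureReal_sum_gt_le_inv_sq (hWmeas n) (hWr n) (hWindep n)
          (mul_pos hp (ha n)).le (hWmean n) hγ (by simpa using hM n) (hlog n)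
          (by exact_mod_cast hn) h2c h4c'
    _ = (n : ℝ)⁻¹ := by field_simp

/-- the contribution of a small fraction of edges is marginal. -/
theorem statement15 (c c' p : ℝ) (hc : 0 < c) (hc' : 0 < c') (hp : 0 < p) :
    ∃ γ₀ : ℝ, 0 < γ₀ ∧ γ₀ < 1 ∧
      ∀ γ : ℝ, 0 < γ → γ < γ₀ →
      ∀ (m : ℕ → ℕ) (a : ℕ → ℝ) (M : ℕ → ℕ)
        (Ω : ℕ → Type) [∀ i, MeasurableSpace (Ω i)] (μ : ∀ i, Measure (Ω i)),
        (∀ i, IsProbabilityMeasure (μ i)) →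
        (∀ i, 0 < a i) → (∀ i, a i < 1) →
        (∀ i : ℕ, c' * Real.log i ≤ p * a i * m i) →
        (∀ i, (M i : ℝ) ≤ c * γ * m i) →
        ∀ W : ∀ i, Fin (M i) → Ω i → ℝ,
          (∀ i j, Measurable (W i j)) →
          (∀ i j, ∀ᵐ ω ∂μ i, W i j ω ∈ Set.Icc (0 : ℝ) 1) →
          (∀ i, iIndepFun (W i) (μ i)) →
          (∀ i j, (∫ ω, W i j ω ∂μ i) ≤ p * a i) →
          Tendsto (fun i : ℕ => (i : ℝ) *
              ((μ i) {ω | p * a i * m i / Real.sqrt (Real.log (1 / γ)) <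
                ∑ j, W i j ω}).toReal)
            atTop (nhds 0) :=
  statement15_general c c' p hc' hp

end HSBM
end
end
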